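/- For every integer d ≥ 4, the real numbers A_d/O_{d-1}, A_{d-1}/O_{d-2}, A_{d-2}/O_{d-3} satisfy A_d/O_{d-1} ≤ A_{d-1}/O_{d-2} + A_{d-2}/O_{d-3}. -/

import Mathlib

/-- The Macaulay bound `a^⟨t⟩`: writing the (unique, greedy) binomial expansion
`a = C(k(t),t) + C(k(t-1),t-1) + ⋯ + C(k(j),j)` with `k(t) > ⋯ > k(j) ≥ j ≥ 1`,
`macaulay t a = C(k(t)+1,t+1) + C(k(t-1)+1,t) + ⋯ + C(k(j)+1,j+1)`.
(The value at `t = 0` is irrelevant for the definitions below.) -/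
def macaulay : ℕ → ℕ → ℕ
  | 0, a => a
  | t+1, a =>
    if a = 0 then 0
    else
      Nat.choose (Nat.findGreatest (fun m => Nat.choose m (t+1) ≤ a) (a + t + 1) + 1) (t+2)
        + macaulay t (a - Nat.choose
            (Nat.findGreatest (fun m => Nat.choose m (t+1) ≤ a) (a + t + 1)) (t+1))

lemma macaulay_zero_right : ∀ t, macaulay t 0 = 0
  | 0 => rfl
  | t+1 => by simp [macaulay]

lemma macaulay_one {t : ℕ} (ht : 1 ≤ t) : macaulay t 1 = 1 := by
  obtain ⟨s, rfl⟩ : ∃ s, t = s + 1 := ⟨t - 1, by omega⟩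
  have hfg : Nat.findGreatest (fun m => Nat.choose m (s+1) ≤ 1) (1 + s + 1) = s + 1 := by
    rw [Nat.findGreatest_eq_iff]
    refine ⟨by omega, fun _ => by simp, ?_⟩
    intro n hn hn2 hP
    have hn3 : n = s + 2 := by omega
    subst hn3
    rw [Nat.choose_succ_self_right] at hP
    omega
  rw [macaulay, if_neg one_ne_zero, hfg]
  simp [macaulay_zero_right]

lemma one_le_macaulay (t a : ℕ) (ha : 1 ≤ a) : 1 ≤ macaulay t a := by
  cases t with
  | zero => simpa [macaulay]
  | succ s =>
    rw [macaulay, if_neg (by omega)]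
    have h1 : s + 1 ≤ Nat.findGreatest (fun m => Nat.choose m (s+1) ≤ a) (a + s + 1) :=
      Nat.le_findGreatest (by omega) (by simp [ha])
    have h2 : 1 ≤ Nat.choose
        (Nat.findGreatest (fun m => Nat.choose m (s+1) ≤ a) (a + s + 1) + 1) (s+2) := by
      calc 1 = Nat.choose (s+2) (s+2) := by simp
        _ ≤ _ := Nat.choose_le_choose _ (by omega)
    omega

/-- A finite O-sequence `(a_0, a_1, …, a_s)`, encoded as a nonempty list of
positive integers with `a_0 = 1` and `a_{t+1} ≤ a_t^⟨t⟩` for all `1 ≤ t ≤ s-1`. -/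
def IsOSeq (l : List ℕ) : Prop :=
  l ≠ [] ∧ (∀ x ∈ l, 0 < x) ∧ l.getD 0 0 = 1 ∧
    ∀ t : ℕ, 1 ≤ t → t + 1 < l.length → l.getD (t+1) 0 ≤ macaulay t (l.getD t 0)

lemma getLastD_eq_getLast' {l : List ℕ} (h : l ≠ []) : l.getLastD 0 = l.getLast h := by
  cases l with
  | nil => simp at h
  | cons a t => rw [List.getLastD_eq_getLast?, List.getLast?_eq_getLast h]; rfl

lemma eq_dropLast_append {l : List ℕ} (h : l ≠ []) : l = l.dropLast ++ [l.getLastD 0] := by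
  rw [getLastD_eq_getLast' h]
  exact (List.dropLast_append_getLast h).symm

lemma getLastD_eq_getD {l : List ℕ} (h : l ≠ []) : l.getLastD 0 = l.getD (l.length - 1) 0 := by
  rw [getLastD_eq_getLast' h, List.getLast_eq_getElem, List.getD_eq_getElem]

lemma isOSeq_append_iff {w : List ℕ} (hw : w ≠ []) (c : ℕ) :
    IsOSeq (w ++ [c]) ↔ IsOSeq w ∧ 0 < c ∧
      (2 ≤ w.length → c ≤ macaulay (w.length - 1) (w.getD (w.length - 1) 0)) := by
  have hn : 1 ≤ w.length := List.length_pos_iff.mpr hw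
  have hlen : (w ++ [c]).length = w.length + 1 := by simp
  constructor
  · rintro ⟨h1, h2, h3, h4⟩
    refine ⟨⟨hw, fun x hx => h2 x (by simp [hx]), ?_, ?_⟩, h2 c (by simp), ?_⟩
    · rw [← List.getD_append w [c] 0 0 hn]; exact h3
    · intro t ht htlen
      have e1 : (w ++ [c]).getD (t+1) 0 = w.getD (t+1) 0 := List.getD_append _ _ _ _ htlen
      have e2 : (w ++ [c]).getD t 0 = w.getD t 0 := List.getD_append _ _ _ _ (by omega)
      have := h4 t ht (by omega)
      rwa [e1, e2] at this
    · intro h2le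
      have := h4 (w.length - 1) (by omega) (by omega)
      have e1 : (w ++ [c]).getD (w.length - 1 + 1) 0 = c := by
        rw [List.getD_append_right _ _ _ _ (by omega)]
        simp [show w.length - 1 + 1 - w.length = 0 by omega]
      have e2 : (w ++ [c]).getD (w.length - 1) 0 = w.getD (w.length - 1) 0 :=
        List.getD_append _ _ _ _ (by omega)
      rwa [e1, e2] at this
  · rintro ⟨⟨h1, h2, h3, h4⟩, hc, hcon⟩
    refine ⟨by simp, ?_, ?_, ?_⟩
    · intro x hx
      rcases List.mem_append.mp hx with h | h
      · exact h2 x h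
      · simp only [List.mem_singleton] at h; omega
    · rw [List.getD_append _ _ _ _ hn]; exact h3
    · intro t ht htlen
      rw [hlen] at htlen
      rcases Nat.lt_or_ge (t+1) w.length with hlt | hge
      · rw [List.getD_append _ _ _ _ hlt, List.getD_append _ _ _ _ (by omega)]
        exact h4 t ht hlt
      · have ht1 : t = w.length - 1 := by omega
        subst ht1
        have e1 : (w ++ [c]).getD (w.length - 1 + 1) 0 = c := by
          rw [List.getD_append_right _ _ _ _ (by omega)]
          simp [show w.length - 1 + 1 - w.length = 0 by omega]
        rw [e1, List.getD_append _ _ _ _ (by omega)]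
        exact hcon (by omega)

lemma IsOSeq.getD_pos {l : List ℕ} (h : IsOSeq l) {i : ℕ} (hi : i < l.length) :
    0 < l.getD i 0 := by
  rw [List.getD_eq_getElem _ _ hi]
  exact h.2.1 _ (l.getElem_mem hi)

lemma isOSeq_replicate {m : ℕ} (hm : 1 ≤ m) : IsOSeq (List.replicate m 1) := by
  have hget : ∀ i, i < m → (List.replicate m 1).getD i 0 = 1 := by
    intro i hi
    rw [List.getD_eq_getElem _ _ (by simpa using hi)]
    simp
  refine ⟨List.ne_nil_of_length_pos (by simp; omega), ?_, hget 0 (by omega), ?_⟩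
  · intro x hx; rw [List.eq_of_mem_replicate hx]; omega
  · intro t ht htlen
    rw [List.length_replicate] at htlen
    rw [hget t (by omega), hget (t+1) (by omega)]
    rw [macaulay_one ht]

/-- `numOSeq d` = the number `O_d` of finite O-sequences of multiplicity `d`. -/
noncomputable def numOSeq (d : ℕ) : ℕ := {l : List ℕ | IsOSeq l ∧ l.sum = d}.ncard

/-- `numASeq d` = the number `A_d` of finite O-sequences of multiplicity `d`
whose last entry is strictly greater than `1`. -/
noncomputable def numASeq (d : ℕ) : ℕ :=
  {l : List ℕ | IsOSeq l ∧ l.sum = d ∧ 1 < l.getLastD 0}.ncard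

/-- `numOCond p n k d` = the number `O(p,n,k,d)` of finite O-sequences
`(a_0,…,a_s)` of multiplicity `d` with `s ≤ n`, `a_i = C(p-1+i, i)` for all
`0 ≤ i ≤ k` (in particular `s ≥ k`), and `a_i < C(p-1+i, i)` for `k < i ≤ s`. -/
noncomputable def numOCond (p n k d : ℕ) : ℕ :=
  {l : List ℕ | IsOSeq l ∧ l.sum = d ∧ l.length - 1 ≤ n ∧ k ≤ l.length - 1 ∧
    (∀ i ≤ k, l.getD i 0 = Nat.choose (p - 1 + i) i) ∧
    (∀ i : ℕ, k < i → i < l.length → l.getD i 0 < Nat.choose (p - 1 + i) i)}.ncard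

lemma finite_posSum (d : ℕ) : {l : List ℕ | (∀ x ∈ l, 0 < x) ∧ l.sum = d}.Finite := by
  classical
  set S := {l : List ℕ | (∀ x ∈ l, 0 < x) ∧ l.sum = d} with hS
  set g : ℕ → Fin (d+1) := fun x => ⟨min x d, by omega⟩ with hg
  have key : ∀ l ∈ S, (l.map g).map (fun y : Fin (d+1) => (y : ℕ)) = l := by
    intro l hl
    rw [List.map_map]
    have : ∀ x ∈ l, ((fun y : Fin (d+1) => (y : ℕ)) ∘ g) x = x := by
      intro x hx
      have hxd : x ≤ d := hl.2 ▸ List.single_le_sum (fun _ _ => Nat.zero_le _) x hx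
      simp [hg, Nat.min_eq_left hxd]
    rw [List.map_congr_left this]; exact List.map_id l
  apply Set.Finite.of_finite_image (f := List.map g) ?_ ?_
  · apply (List.finite_length_le (Fin (d+1)) d).subset
    rintro L ⟨l, hl, rfl⟩
    simp only [Set.mem_setOf_eq, List.length_map]
    calc l.length ≤ l.sum := List.length_le_sum_of_one_le l hl.1
      _ = d := hl.2
  · intro l1 h1 l2 h2 heq
    rw [← key l1 h1, ← key l2 h2, heq]

lemma finite_oseq_set {d : ℕ} (P : List ℕ → Prop) :
    {l : List ℕ | IsOSeq l ∧ l.sum = d ∧ P l}.Finite :=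
  (finite_posSum d).subset (fun l hl => ⟨hl.1.2.1, hl.2.1⟩)

lemma finite_oseq_set' {d : ℕ} : {l : List ℕ | IsOSeq l ∧ l.sum = d}.Finite :=
  (finite_posSum d).subset (fun l hl => ⟨hl.1.2.1, hl.2⟩)

lemma numOSeq_pos {m : ℕ} (hm : 1 ≤ m) : 0 < numOSeq m := by
  rw [numOSeq, Set.ncard_pos finite_oseq_set']
  refine ⟨List.replicate m 1, isOSeq_replicate hm, by simp⟩

lemma numOSeq_mono {m : ℕ} : numOSeq m ≤ numOSeq (m + 1) := by
  rw [numOSeq, numOSeq]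
  apply Set.ncard_le_ncard_of_injOn (fun l => l ++ [1]) ?_ ?_ finite_oseq_set'
  · rintro l ⟨hl, hsum⟩
    have hw : l ≠ [] := hl.1
    refine ⟨(isOSeq_append_iff hw 1).mpr ⟨hl, one_pos, ?_⟩, by simp [hsum]⟩
    intro h2
    exact one_le_macaulay _ _ (hl.getD_pos (by omega))
  · intro l1 _ l2 _ heq
    have := congrArg List.dropLast heq
    simpa using this

lemma numASeq_le {d : ℕ} (hd : 4 ≤ d) : numASeq d ≤ numASeq (d-1) + numASeq (d-2) := by
  classical
  set X : Set (List ℕ) := {l | IsOSeq l ∧ l.sum = d ∧ 2 < l.getLastD 0} with hXdef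
  set Y : Set (List ℕ) := {l | IsOSeq l ∧ l.sum = d ∧ l.getLastD 0 = 2} with hYdef
  have hXfin : X.Finite := finite_oseq_set _
  have hYfin : Y.Finite := finite_oseq_set _
  -- structural facts for members of X ∪ Y
  have struct : ∀ l : List ℕ, IsOSeq l → l.sum = d → 1 < l.getLastD 0 →
      l.dropLast ≠ [] ∧ l = l.dropLast ++ [l.getLastD 0] ∧
      IsOSeq l.dropLast ∧ l.dropLast.sum + l.getLastD 0 = d ∧
      (2 ≤ l.dropLast.length →
        l.getLastD 0 ≤ macaulay (l.dropLast.length - 1)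
          (l.dropLast.getD (l.dropLast.length - 1) 0)) := by
    intro l hl hsum hlast
    have hne : l ≠ [] := hl.1
    have hdec : l = l.dropLast ++ [l.getLastD 0] := eq_dropLast_append hne
    have hwne : l.dropLast ≠ [] := by
      intro h0
      have h1 := hl.2.2.1
      rw [hdec, h0, List.nil_append] at h1
      rw [show ([l.getLastD 0].getD 0 0) = l.getLastD 0 from rfl] at h1
      omega
    have hiff := (isOSeq_append_iff hwne (l.getLastD 0)).mp (hdec ▸ hl)
    have hsum2 : l.dropLast.sum + l.getLastD 0 = d := by
      have h5 := congrArg List.sum hdec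
      rw [List.sum_append, List.sum_cons, List.sum_nil] at h5
      omega
    exact ⟨hwne, hdec, hiff.1, hsum2, hiff.2.2⟩
  -- X injects into A_{d-1}
  have hX : X.ncard ≤ numASeq (d-1) := by
    rw [numASeq]
    apply Set.ncard_le_ncard_of_injOn
      (fun l => l.dropLast ++ [l.getLastD 0 - 1]) ?_ ?_ (finite_oseq_set _)
    · rintro l ⟨hl, hsum, hlast⟩
      obtain ⟨hwne, hdec, hw, hsum2, hcon⟩ := struct l hl hsum (by omega)
      refine ⟨(isOSeq_append_iff hwne _).mpr ⟨hw, by omega, ?_⟩, ?_, ?_⟩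
      · intro h2
        exact le_trans (by omega) (hcon h2)
      · simp only [List.sum_append, List.sum_cons, List.sum_nil]
        omega
      · rw [List.getLastD_concat]
        omega
    · rintro l1 ⟨hl1, hsum1, hlast1⟩ l2 ⟨hl2, hsum2, hlast2⟩ heq
      simp only at heq
      have hd1 : l1.dropLast = l2.dropLast := by
        have := congrArg List.dropLast heq
        simpa using this
      have hg1 : l1.getLastD 0 - 1 = l2.getLastD 0 - 1 := by
        have h6 := congrArg (fun L : List ℕ => L.getLastD 0) heq
        simp only [List.getLastD_concat] at h6
        exact h6
      rw [eq_dropLast_append hl1.1, eq_dropLast_append hl2.1, hd1]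
      congr 1
      simp only [List.cons.injEq, and_true]
      omega
  -- Y injects into A_{d-2}
  have hY : Y.ncard ≤ numASeq (d-2) := by
    rw [numASeq]
    apply Set.ncard_le_ncard_of_injOn List.dropLast ?_ ?_ (finite_oseq_set _)
    · rintro l ⟨hl, hsum, hlast⟩
      obtain ⟨hwne, hdec, hw, hsum2, hcon⟩ := struct l hl hsum (by omega)
      have hwlen : 2 ≤ l.dropLast.length := by
        rcases Nat.lt_or_ge l.dropLast.length 2 with h | h
        · exfalso
          have h1 : l.dropLast.length = 1 := by
            have := List.length_pos_iff.mpr hwne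
            omega
          obtain ⟨x, hx⟩ := List.length_eq_one_iff.mp h1
          have hx1 : x = 1 := by
            have h0 := hl.2.2.1
            rw [hdec, hx] at h0
            simpa using h0
          rw [hx, hx1] at hsum2
          simp only [List.sum_cons, List.sum_nil] at hsum2
          omega
        · exact h
      have hcon2 := hcon hwlen
      rw [hlast] at hcon2
      have hvpos : 0 < l.dropLast.getD (l.dropLast.length - 1) 0 :=
        hw.getD_pos (by omega)
      have hv2 : 1 < l.dropLast.getLastD 0 := by
        rw [getLastD_eq_getD hwne]
        rcases Nat.lt_or_ge 1 (l.dropLast.getD (l.dropLast.length - 1) 0) with h | h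
        · exact h
        · exfalso
          have hv1 : l.dropLast.getD (l.dropLast.length - 1) 0 = 1 := by omega
          rw [hv1, macaulay_one (by omega)] at hcon2
          omega
      exact ⟨hw, by omega, hv2⟩
    · rintro l1 ⟨hl1, hsum1, hlast1⟩ l2 ⟨hl2, hsum2, hlast2⟩ heq
      rw [eq_dropLast_append hl1.1, eq_dropLast_append hl2.1, heq, hlast1, hlast2]
  -- combine
  have hsub : {l : List ℕ | IsOSeq l ∧ l.sum = d ∧ 1 < l.getLastD 0} ⊆ X ∪ Y := by
    rintro l ⟨hl, hsum, hlast⟩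
    rcases Nat.lt_or_ge 2 (l.getLastD 0) with h | h
    · exact Or.inl ⟨hl, hsum, h⟩
    · exact Or.inr ⟨hl, hsum, by omega⟩
  calc numASeq d ≤ (X ∪ Y).ncard :=
        Set.ncard_le_ncard hsub (hXfin.union hYfin)
    _ ≤ X.ncard + Y.ncard := Set.ncard_union_le X Y
    _ ≤ numASeq (d-1) + numASeq (d-2) := Nat.add_le_add hX hY

/-- For every integer `d ≥ 4`,
`A_d/O_{d-1} ≤ A_{d-1}/O_{d-2} + A_{d-2}/O_{d-3}` as real numbers. -/
theorem Ad_ratio_subadditive (d : ℕ) (hd : 4 ≤ d) :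
    (numASeq d : ℝ) / (numOSeq (d - 1) : ℝ)
      ≤ (numASeq (d - 1) : ℝ) / (numOSeq (d - 2) : ℝ)
        + (numASeq (d - 2) : ℝ) / (numOSeq (d - 3) : ℝ) := by
  have h2 : numOSeq (d-2) ≤ numOSeq (d-1) := by
    have := numOSeq_mono (m := d-2)
    rwa [show d - 2 + 1 = d - 1 by omega] at this
  have h3 : numOSeq (d-3) ≤ numOSeq (d-1) := by
    have ha := numOSeq_mono (m := d-3)
    rw [show d - 3 + 1 = d - 2 by omega] at ha
    exact le_trans ha h2
  have p2 : 0 < numOSeq (d-2) := numOSeq_pos (by omega)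
  have p3 : 0 < numOSeq (d-3) := numOSeq_pos (by omega)
  have p1 : 0 < numOSeq (d-1) := numOSeq_pos (by omega)
  have key : (numASeq d : ℝ) ≤ (numASeq (d-1) : ℝ) + (numASeq (d-2) : ℝ) := by
    have := numASeq_le hd
    exact_mod_cast this
  have p1' : (0:ℝ) < (numOSeq (d-1) : ℝ) := by exact_mod_cast p1
  have p2' : (0:ℝ) < (numOSeq (d-2) : ℝ) := by exact_mod_cast p2
  have p3' : (0:ℝ) < (numOSeq (d-3) : ℝ) := by exact_mod_cast p3
  calc (numASeq d : ℝ) / (numOSeq (d-1) : ℝ)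
      ≤ ((numASeq (d-1) : ℝ) + (numASeq (d-2) : ℝ)) / (numOSeq (d-1) : ℝ) := by
        exact (div_le_div_iff_of_pos_right p1').mpr key
    _ = (numASeq (d-1) : ℝ) / (numOSeq (d-1) : ℝ)
          + (numASeq (d-2) : ℝ) / (numOSeq (d-1) : ℝ) := add_div _ _ _
    _ ≤ (numASeq (d-1) : ℝ) / (numOSeq (d-2) : ℝ)
          + (numASeq (d-2) : ℝ) / (numOSeq (d-3) : ℝ) := by
        have c2 : (numOSeq (d-2):ℝ) ≤ (numOSeq (d-1):ℝ) := by exact_mod_cast h2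
        have c3 : (numOSeq (d-3):ℝ) ≤ (numOSeq (d-1):ℝ) := by exact_mod_cast h3
        gcongr <;> first | assumption | positivity
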